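/- arXiv:1908.03207 — 2 statements merged into one kernel-verified Lean document; each statement's English description precedes it below -/
import Mathlib

section
/- (Euler's identity) For |x| < 1 and 0 < q < 1, ∑_{k=0}^∞ x^k / (q;q)_k = 1 / (x;q)_∞. -/
open Finset

noncomputable def qPoch (q a : ℂ) (n : ℕ) : ℂ := ∏ j ∈ Finset.range n, (1 - a * q ^ j)

noncomputable def qPochInf (q a : ℂ) : ℂ := ∏' j : ℕ, (1 - a * q ^ j)

noncomputable def cauchyP (q x y : ℂ) (n : ℕ) : ℂ := ∏ j ∈ Finset.range n, (x - q ^ j * y)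

noncomputable def qBinom (q : ℂ) (n k : ℕ) : ℂ := qPoch q q n / (qPoch q q k * qPoch q q (n - k))

noncomputable def qDeriv (q : ℂ) (f : ℂ → ℂ) : ℂ → ℂ := fun x => (f x - f (q * x)) / x

noncomputable def qTheta (q : ℂ) (f : ℂ → ℂ → ℂ) : ℂ → ℂ → ℂ :=
  fun x y => (f (q⁻¹ * x) y - f x (q * y)) / (q⁻¹ * x - y)

/-- `₁Φ₁(a; 0; q, z)` -/
noncomputable def phi11 (q a z : ℂ) : ℂ :=
  ∑' m : ℕ, (-1) ^ m * q ^ m.choose 2 * qPoch q a m * z ^ m / qPoch q q m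

/-- generalized Cauchy polynomials `p_n(x,y,a)` -/
noncomputable def genCauchy (q a x y : ℂ) (n : ℕ) : ℂ :=
  ∑ k ∈ Finset.range (n + 1),
    qBinom q n k * (-1) ^ k * q ^ k.choose 2 * qPoch q a k * x ^ (n - k) * y ^ k

/-- generalized Hahn polynomials `h_n(x,y,a,b|q)` -/
noncomputable def hahn (q x y a b : ℂ) (n : ℕ) : ℂ :=
  ∑ k ∈ Finset.range (n + 1),
    qBinom q n k * (-1) ^ k * q ^ k.choose 2 * b ^ k * qPoch q a k * cauchyP q y x (n - k)

/-!
The series `e_q(y) = ∑ yᵏ / (q;q)ₖ` satisfies `e_q(qy) = (1 - y) e_q(y)`, since termwise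
`yᵏ (1 - qᵏ) / (q;q)ₖ = y · yᵏ⁻¹ / (q;q)ₖ₋₁`. Iterating gives `(y;q)ₙ e_q(y) = e_q(qⁿy)`; as
`n → ∞` the left side tends to `(y;q)_∞ e_q(y)` and, by dominated convergence, the right side
tends to `e_q(0) = 1`.
-/

open Filter Topology

noncomputable def qExp (q y : ℂ) : ℂ := ∑' k : ℕ, y ^ k / qPoch q q k

section

variable {q : ℂ}

lemma qPoch_succ (q a : ℂ) (n : ℕ) : qPoch q a (n + 1) = qPoch q a n * (1 - a * q ^ n) :=
  prod_range_succ _ _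

lemma norm_pow_mul_lt_one (hq : ‖q‖ ≤ 1) {a : ℂ} (ha : ‖a‖ < 1) (n : ℕ) : ‖q ^ n * a‖ < 1 :=
  calc ‖q ^ n * a‖ = ‖q‖ ^ n * ‖a‖ := by rw [norm_mul, norm_pow]
    _ ≤ ‖a‖ := mul_le_of_le_one_left (norm_nonneg a) (pow_le_one₀ (norm_nonneg q) hq)
    _ < 1 := ha

lemma qPoch_ne_zero (hq : ‖q‖ ≤ 1) {a : ℂ} (ha : ‖a‖ < 1) (n : ℕ) : qPoch q a n ≠ 0 := by
  refine prod_ne_zero_iff.2 fun j _ hj => ?_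
  have h := norm_pow_mul_lt_one hq ha j
  rw [mul_comm, ← sub_eq_zero.1 hj, norm_one] at h
  exact lt_irrefl 1 h

lemma qExp_term_succ (q y : ℂ) (k : ℕ) :
    y ^ (k + 1) / qPoch q q (k + 1) = y / (1 - q * q ^ k) * (y ^ k / qPoch q q k) := by
  simp only [qPoch_succ, pow_succ, div_eq_mul_inv, mul_inv]
  ring

lemma summable_norm_qExp_term (hq : ‖q‖ < 1) {y : ℂ} (hy : ‖y‖ < 1) :
    Summable fun k : ℕ => ‖y ^ k / qPoch q q k‖ := by
  have hratio : Tendsto (fun k : ℕ => ‖y‖ / ‖1 - q * q ^ k‖) atTop (𝓝 ‖y‖) := by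
    have h := ((tendsto_pow_atTop_nhds_zero_of_norm_lt_one hq).const_mul q).const_sub 1
    simpa [div_eq_mul_inv] using (h.norm.inv₀ (by simp)).const_mul ‖y‖
  refine summable_of_ratio_norm_eventually_le (r := (1 + ‖y‖) / 2) (by linarith) ?_
  filter_upwards [hratio.eventually_le_const (by linarith : ‖y‖ < (1 + ‖y‖) / 2)] with k hk
  rw [norm_norm, norm_norm, qExp_term_succ, norm_mul, norm_div]
  exact mul_le_mul_of_nonneg_right hk (norm_nonneg _)

lemma summable_qExp_term (hq : ‖q‖ < 1) {y : ℂ} (hy : ‖y‖ < 1) :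
    Summable fun k : ℕ => y ^ k / qPoch q q k :=
  (summable_norm_qExp_term hq hy).of_norm

lemma qExp_zero (q : ℂ) : qExp q 0 = 1 := by
  rw [qExp, tsum_eq_single 0 fun k hk => by simp [hk]]
  simp [qPoch]

lemma qExp_mul_left (hq : ‖q‖ < 1) {y : ℂ} (hy : ‖y‖ < 1) :
    qExp q (q * y) = (1 - y) * qExp q y := by
  have hqy : ‖q * y‖ < 1 := by simpa using norm_pow_mul_lt_one hq.le hy 1
  have hdiff : ∀ k : ℕ, y ^ (k + 1) / qPoch q q (k + 1) - (q * y) ^ (k + 1) / qPoch q q (k + 1)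
      = y * (y ^ k / qPoch q q k) := by
    intro k
    have hfactor : 1 - q * q ^ k ≠ 0 := by
      have h := qPoch_ne_zero hq.le hq (k + 1)
      rw [qPoch_succ] at h
      exact right_ne_zero_of_mul h
    rw [qExp_term_succ, qExp_term_succ]
    field_simp
    ring
  have hsum : qExp q y - qExp q (q * y) = y * qExp q y := by
    rw [qExp, qExp, ← (summable_qExp_term hq hy).tsum_sub (summable_qExp_term hq hqy),
      ((summable_qExp_term hq hy).sub (summable_qExp_term hq hqy)).tsum_eq_zero_add]
    simp only [hdiff, tsum_mul_left, pow_zero, sub_self, zero_add]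
  linear_combination -hsum

lemma qPoch_mul_qExp (hq : ‖q‖ < 1) {y : ℂ} (hy : ‖y‖ < 1) (n : ℕ) :
    qPoch q y n * qExp q y = qExp q (q ^ n * y) := by
  induction n with
  | zero => simp [qPoch]
  | succ n ih =>
    rw [qPoch_succ, mul_right_comm, ih, pow_succ', mul_assoc,
      qExp_mul_left hq (norm_pow_mul_lt_one hq.le hy n), mul_comm y, mul_comm]

lemma tendsto_qExp_pow_mul (hq : ‖q‖ < 1) {y : ℂ} (hy : ‖y‖ < 1) :
    Tendsto (fun n : ℕ => qExp q (q ^ n * y)) atTop (𝓝 1) := by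
  rw [← qExp_zero q]
  refine tendsto_tsum_of_dominated_convergence (summable_norm_qExp_term hq hy) (fun k => ?_)
    (Eventually.of_forall fun n k => ?_)
  · have h := (tendsto_pow_atTop_nhds_zero_of_norm_lt_one hq).mul_const y
    rw [zero_mul] at h
    exact (h.pow k).div_const _
  · rw [norm_div, norm_div, norm_pow, norm_pow]
    gcongr
    simpa using mul_le_of_le_one_left (norm_nonneg y) (pow_le_one₀ (norm_nonneg q) hq.le)

lemma tendsto_qPoch_qPochInf (hq : ‖q‖ < 1) (a : ℂ) :
    Tendsto (fun n : ℕ => qPoch q a n) atTop (𝓝 (qPochInf q a)) := by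
  have hmult : Multipliable fun j : ℕ => 1 - a * q ^ j := by
    simpa [sub_eq_add_neg] using multipliable_one_add_of_summable (f := fun j : ℕ => -(a * q ^ j))
      (by simpa [norm_mul] using (summable_geometric_of_lt_one (norm_nonneg q) hq).mul_left ‖a‖)
  exact hmult.hasProd.tendsto_prod_nat

lemma qPochInf_mul_qExp (hq : ‖q‖ < 1) {y : ℂ} (hy : ‖y‖ < 1) : qPochInf q y * qExp q y = 1 :=
  tendsto_nhds_unique ((tendsto_qPoch_qPochInf hq y).mul_const _)
    (by simpa only [qPoch_mul_qExp hq hy] using tendsto_qExp_pow_mul hq hy)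

end

theorem stmt4 (q : ℝ) (hq0 : 0 < q) (hq1 : q < 1) (x : ℂ) (hx : ‖x‖ < 1) :
    ∑' k : ℕ, x ^ k / qPoch (q : ℂ) (q : ℂ) k = 1 / qPochInf (q : ℂ) x := by
  have hq : ‖(q : ℂ)‖ < 1 := by rwa [Complex.norm_real, Real.norm_of_nonneg hq0.le]
  exact eq_one_div_of_mul_eq_one_right (qPochInf_mul_qExp hq hx)
end

section
/- Let θ_{xy} f(x,y) := (f(q^{-1}x, y) − f(x, qy))/(q^{-1}x − y). Then θ_{xy}^k{(xt;q)_∞/(yt;q)_∞} = (−t)^k (xt;q)_∞/(yt;q)_∞ for all k ≥ 0, where the function is regarded as a function of (x,y) with |yt| < 1. -/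
open Finset

/-!
The ratio `F(x, y) = (xt;q)_∞ / (yt;q)_∞` is an eigenfunction of `θ_{xy}` with eigenvalue `-t`:
the shifts `x ↦ q⁻¹x` and `y ↦ qy` each split off one factor, `(xt/q;q)_∞ = (1 - xt/q) (xt;q)_∞`
and `(yt;q)_∞ = (1 - yt) (qyt;q)_∞`, and the difference quotient of the two resulting factors is
`-t`. Both shifts preserve the region `‖yt‖ < 1`, `x ∉ q^ℤ y`, so the eigenvalue equation iterates.
-/

section QPochhammer

variable {q : ℂ}

lemma summable_norm_neg_mul_pow (hq : ‖q‖ < 1) (a : ℂ) :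
    Summable fun j : ℕ => ‖-(a * q ^ j)‖ := by
  simpa [norm_mul, norm_pow] using (summable_geometric_of_lt_one (norm_nonneg q) hq).mul_left ‖a‖

lemma multipliable_one_sub_mul_pow (hq : ‖q‖ < 1) (a : ℂ) :
    Multipliable fun j : ℕ => 1 - a * q ^ j := by
  simpa [sub_eq_add_neg] using multipliable_one_add_of_summable (summable_norm_neg_mul_pow hq a)

lemma qPochInf_eq_one_sub_mul (hq : ‖q‖ < 1) (a : ℂ) :
    qPochInf q a = (1 - a) * qPochInf q (q * a) := by
  have hshift : (fun j : ℕ => 1 - a * q ^ (j + 1)) = fun j => 1 - q * a * q ^ j := by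
    funext j
    ring
  rw [qPochInf, tprod_eq_zero_mul' (hshift ▸ multipliable_one_sub_mul_pow hq (q * a)), hshift,
    qPochInf, pow_zero, mul_one]

lemma qTheta_qPochInf_div_qPochInf (hq : ‖q‖ < 1) (hq0 : q ≠ 0) (t : ℂ) {x y : ℂ}
    (hyt : ‖y * t‖ < 1) (hxy : q⁻¹ * x ≠ y) :
    qTheta q (fun u v => qPochInf q (u * t) / qPochInf q (v * t)) x y =
      -t * (qPochInf q (x * t) / qPochInf q (y * t)) := by
  have hx : qPochInf q (q⁻¹ * x * t) = (1 - q⁻¹ * x * t) * qPochInf q (x * t) := by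
    rw [qPochInf_eq_one_sub_mul hq, ← mul_assoc, ← mul_assoc, mul_inv_cancel₀ hq0, one_mul]
  have hy : qPochInf q (y * t) = (1 - y * t) * qPochInf q (q * y * t) := by
    rw [qPochInf_eq_one_sub_mul hq, mul_assoc]
  have hyt' : 1 - y * t ≠ 0 := fun h => by
    rw [← sub_eq_zero.mp h, norm_one] at hyt
    exact hyt.false
  have hD : q⁻¹ * x - y ≠ 0 := sub_ne_zero.mpr hxy
  simp only [qTheta]
  rw [hx, hy, div_eq_iff hD, ← mul_div_mul_left (qPochInf q (x * t)) _ hyt', ← sub_div]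
  ring

end QPochhammer

lemma qTheta_iterate_apply_of_eigen {q c : ℂ} {f : ℂ → ℂ → ℂ} {P : ℂ → ℂ → Prop}
    (hleft : ∀ x y, P x y → P (q⁻¹ * x) y) (hright : ∀ x y, P x y → P x (q * y))
    (hf : ∀ x y, P x y → qTheta q f x y = c * f x y) (k : ℕ) {x y : ℂ} (hxy : P x y) :
    (qTheta q)^[k] f x y = c ^ k * f x y := by
  induction k generalizing x y with
  | zero => simp
  | succ k ih =>
    calc (qTheta q)^[k + 1] f x y
        = ((qTheta q)^[k] f (q⁻¹ * x) y - (qTheta q)^[k] f x (q * y)) / (q⁻¹ * x - y) := by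
          rw [Function.iterate_succ_apply']
          rfl
      _ = c ^ k * qTheta q f x y := by
          rw [ih (hleft x y hxy), ih (hright x y hxy), ← mul_sub, mul_div_assoc]
          rfl
      _ = c ^ (k + 1) * f x y := by rw [hf x y hxy, pow_succ, mul_assoc]

theorem stmt15 (q : ℝ) (hq0 : 0 < q) (hq1 : q < 1) (t : ℂ) (k : ℕ) (x y : ℂ)
    (hyt : ‖y * t‖ < 1) (hxy : ∀ m : ℤ, x ≠ (q : ℂ) ^ m * y) :
    (qTheta (q : ℂ))^[k]
        (fun u v => qPochInf (q : ℂ) (u * t) / qPochInf (q : ℂ) (v * t)) x y =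
      (-t) ^ k * qPochInf (q : ℂ) (x * t) / qPochInf (q : ℂ) (y * t) := by
  have hq : ‖(q : ℂ)‖ < 1 := by rwa [Complex.norm_real, Real.norm_of_nonneg hq0.le]
  have hq0' : (q : ℂ) ≠ 0 := mod_cast hq0.ne'
  rw [mul_div_assoc]
  refine qTheta_iterate_apply_of_eigen
    (P := fun x y => ‖y * t‖ < 1 ∧ ∀ m : ℤ, x ≠ (q : ℂ) ^ m * y) ?_ ?_ ?_ k ⟨hyt, hxy⟩
  · rintro x y ⟨hyt, hxy⟩
    refine ⟨hyt, fun m h => hxy (m + 1) ?_⟩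
    rw [← mul_inv_cancel_left₀ hq0' x, h, zpow_add_one₀ hq0']
    ring
  · rintro x y ⟨hyt, hxy⟩
    refine ⟨?_, fun m h => hxy (m + 1) (by rw [h, zpow_add_one₀ hq0']; ring)⟩
    rw [mul_assoc, norm_mul]
    exact (mul_le_of_le_one_left (norm_nonneg _) hq.le).trans_lt hyt
  · rintro x y ⟨hyt, hxy⟩
    refine qTheta_qPochInf_div_qPochInf hq hq0' t hyt fun h => hxy 1 ?_
    rw [zpow_one, ← h, mul_inv_cancel_left₀ hq0']
end
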